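/- Let k be a positive integer, let H be the dihedral arrangement I₂(k) of k equally spaced lines through the origin in ℝ², with sectors T₀,…,T_{2k−1} in cyclic order, and let p be a positive divisor of k with p < k. Let K be the closed disc B(0,ρ) and let a ∈ ℝ² with ‖a‖ ≤ ρ. Then for every 0 ≤ r ≤ p−1, Σ_{i=0}^{2k/p − 1} Area(T_{r+pi} ∩ (K + a)) = Area(K)/p = πρ²/p. -/

import Mathlib

/-!
Since `‖a‖ ≤ ρ`, the disc is star-shaped about the origin, so in polar coordinates the area of
its part in the angular range `(α, β)` is `∫_α^β R(θ)² / 2 dθ`, where `R(θ)` is the distance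
from the origin to the boundary circle in direction `e^{iθ}`. For antipodal directions
`(R(θ)² + R(θ + π)²) / 2 = ρ² + Re((e^{iθ} ā)²)`, and the second term sums to zero over the
`m = k / p ≥ 2` directions `θ + iπ/m`, `i < m`, since `e^{2πi/m}` is a primitive `m`-th root
of unity. The slices of one person are the translates of one slice of width `π/k` by the angles
`iπ/m`, `i < 2m`, so their total area is `∫` over one slice of `mρ²`, that is `mρ²π/k = πρ²/p`.
-/

open MeasureTheory Metric Real

noncomputable section

/-- The `j`-th open sector of the dihedral arrangement `I₂(k)` of `k` equally spaced lines
through the origin of `ℝ²`: the points with polar angle strictly between `jπ/k` and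
`(j+1)π/k`.  The sectors `T₀, …, T_{2k−1}` are in cyclic order. -/
def sector (k j : ℕ) : Set (EuclideanSpace ℝ (Fin 2)) :=
  {x | ∃ ρ θ : ℝ, 0 < ρ ∧ (j : ℝ) * π / k < θ ∧ θ < ((j : ℝ) + 1) * π / k ∧
    x = ρ • (WithLp.toLp 2 ![Real.cos θ, Real.sin θ] : EuclideanSpace ℝ (Fin 2))}

open Set
open scoped RealInnerProductSpace ComplexConjugate

namespace PizzaSharing

section InnerProductSpace

variable {E F : Type*} [NormedAddCommGroup E] [InnerProductSpace ℝ E]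
  [NormedAddCommGroup F] [InnerProductSpace ℝ F]

/-- For `‖u‖ = 1` and `‖b‖ ≤ ρ`, the nonnegative root `r` of `‖r • u - b‖ = ρ`: the distance
from `0` to the sphere of radius `ρ` about `b` in the direction `u`. -/
def radialExtent (b u : E) (ρ : ℝ) : ℝ :=
  ⟪b, u⟫ + √(ρ ^ 2 - ‖b‖ ^ 2 + ⟪b, u⟫ ^ 2)

variable {b u : E} {ρ : ℝ}

lemma abs_inner_le_sqrt (hb : ‖b‖ ≤ ρ) : |⟪b, u⟫| ≤ √(ρ ^ 2 - ‖b‖ ^ 2 + ⟪b, u⟫ ^ 2) :=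
  Real.abs_le_sqrt (by nlinarith [norm_nonneg b])

lemma radialExtent_nonneg (hb : ‖b‖ ≤ ρ) : 0 ≤ radialExtent b u ρ := by
  have := abs_inner_le_sqrt (u := u) hb
  unfold radialExtent
  linarith [neg_abs_le ⟪b, u⟫]

lemma smul_mem_closedBall_iff (hu : ‖u‖ = 1) (hb : ‖b‖ ≤ ρ) {r : ℝ} (hr : 0 ≤ r) :
    r • u ∈ closedBall b ρ ↔ r ≤ radialExtent b u ρ := by
  have hρ : 0 ≤ ρ := (norm_nonneg b).trans hb
  have hD : 0 ≤ ρ ^ 2 - ‖b‖ ^ 2 + ⟪b, u⟫ ^ 2 := by nlinarith [norm_nonneg b]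
  have hc := abs_inner_le_sqrt (u := u) hb
  rw [mem_closedBall, dist_eq_norm, ← sq_le_sq₀ (norm_nonneg _) hρ, norm_sub_sq_real,
    norm_smul, real_inner_smul_left, real_inner_comm, hu, Real.norm_of_nonneg hr, radialExtent]
  have key : (r * 1) ^ 2 - 2 * (r * ⟪b, u⟫) + ‖b‖ ^ 2 ≤ ρ ^ 2 ↔
      (r - ⟪b, u⟫) ^ 2 ≤ ρ ^ 2 - ‖b‖ ^ 2 + ⟪b, u⟫ ^ 2 := by
    constructor <;> intro h <;> nlinarith
  rw [key, Real.sq_le hD]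
  constructor
  · intro h; linarith [h.2]
  · intro h; exact ⟨by linarith [le_abs_self ⟪b, u⟫], by linarith⟩

lemma radialExtent_sq_add_radialExtent_neg_sq (hb : ‖b‖ ≤ ρ) :
    radialExtent b u ρ ^ 2 + radialExtent b (-u) ρ ^ 2
      = 2 * (ρ ^ 2 - ‖b‖ ^ 2) + 4 * ⟪b, u⟫ ^ 2 := by
  have hD : 0 ≤ ρ ^ 2 - ‖b‖ ^ 2 + ⟪b, u⟫ ^ 2 := by nlinarith [norm_nonneg b]
  simp only [radialExtent, inner_neg_right, neg_sq]
  linear_combination 2 * Real.sq_sqrt hD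

lemma radialExtent_map (f : E →ₗᵢ[ℝ] F) (b u : E) (ρ : ℝ) :
    radialExtent (f b) (f u) ρ = radialExtent b u ρ := by
  simp only [radialExtent, f.inner_map_map, f.norm_map]

lemma continuous_radialExtent {X : Type*} [TopologicalSpace X] {u : X → E} (hu : Continuous u)
    (b : E) (ρ : ℝ) : Continuous fun x => radialExtent b (u x) ρ := by
  unfold radialExtent
  fun_prop

end InnerProductSpace

lemma setLIntegral_Ioc_zero_ofReal {T : ℝ} (hT : 0 ≤ T) :
    ∫⁻ r in Ioc 0 T, ENNReal.ofReal r = ENNReal.ofReal (T ^ 2 / 2) := by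
  have hint : IntegrableOn (fun r : ℝ => r) (Ioc 0 T) := continuous_id.integrableOn_Ioc
  rw [← ofReal_integral_eq_lintegral_ofReal hint
    (ae_restrict_of_forall_mem measurableSet_Ioc fun r hr => hr.1.le),
    ← intervalIntegral.integral_of_le hT, integral_id]
  norm_num

theorem volume_setOf_arg_mem_norm_le {t : ℝ → ℝ} (ht : Continuous t) (ht0 : ∀ θ, 0 ≤ t θ)
    {α β : ℝ} (hα : -π ≤ α) (hαβ : α ≤ β) (hβ : β ≤ π) :
    volume {z : ℂ | z ≠ 0 ∧ z.arg ∈ Ioo α β ∧ ‖z‖ ≤ t z.arg}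
      = ENNReal.ofReal (∫ θ in α..β, t θ ^ 2 / 2) := by
  set S := {z : ℂ | z ≠ 0 ∧ z.arg ∈ Ioo α β ∧ ‖z‖ ≤ t z.arg}
  set B : Set (ℝ × ℝ) := {p | p.1 ∈ Ioc 0 (t p.2) ∧ p.2 ∈ Ioo α β}
  have hS : MeasurableSet S :=
    (measurableSet_singleton 0).compl.inter ((Complex.measurable_arg measurableSet_Ioo).inter
      (measurableSet_le measurable_norm (ht.measurable.comp Complex.measurable_arg)))
  have hB : MeasurableSet B :=
    ((measurableSet_lt measurable_const measurable_fst).inter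
      (measurableSet_le measurable_fst (ht.measurable.comp measurable_snd))).inter
      (measurable_snd measurableSet_Ioo)
  have hpolar : ∀ p : ℝ × ℝ, Complex.polarCoord.target.indicator
      (fun p => ENNReal.ofReal p.1 • S.indicator 1 (Complex.polarCoord.symm p)) p
      = B.indicator (fun p => ENNReal.ofReal p.1) p := by
    rintro ⟨r, θ⟩
    by_cases hp : (r, θ) ∈ Complex.polarCoord.target
    · have hr : 0 < r := hp.1
      have h := Complex.polarCoord.right_inv hp
      rw [Complex.polarCoord_apply, Prod.mk.injEq] at h
      have hz : Complex.polarCoord.symm (r, θ) ≠ 0 :=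
        norm_ne_zero_iff.mp (h.1.symm ▸ hr.ne')
      have hmem : Complex.polarCoord.symm (r, θ) ∈ S ↔ (r, θ) ∈ B := by
        simp only [S, B, mem_ofPred_eq, h.1, h.2, mem_Ioc]
        exact ⟨fun ⟨_, hθ, hrt⟩ => ⟨⟨hr, hrt⟩, hθ⟩, fun ⟨⟨_, hrt⟩, hθ⟩ => ⟨hz, hθ, hrt⟩⟩
      rw [indicator_of_mem hp]
      by_cases hrθ : (r, θ) ∈ B
      · rw [indicator_of_mem hrθ, indicator_of_mem (hmem.2 hrθ), Pi.one_apply, smul_eq_mul,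
          mul_one]
      · rw [indicator_of_notMem hrθ, indicator_of_notMem (mt hmem.1 hrθ), smul_zero]
    · refine (indicator_of_notMem hp _).trans (indicator_of_notMem (fun hrθ => hp ?_) _).symm
      exact ⟨hrθ.1.1, by linarith [hrθ.2.1], by linarith [hrθ.2.2]⟩
  calc volume S = ∫⁻ z, S.indicator 1 z := (lintegral_indicator_one hS).symm
    _ = ∫⁻ p in Complex.polarCoord.target,
          ENNReal.ofReal p.1 • S.indicator 1 (Complex.polarCoord.symm p) :=
        (Complex.lintegral_comp_polarCoord_symm _).symm
    _ = ∫⁻ p, B.indicator (fun p => ENNReal.ofReal p.1) p := by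
        rw [← lintegral_indicator Complex.polarCoord.open_target.measurableSet]
        simp_rw [hpolar]
    _ = ∫⁻ θ, ∫⁻ r, B.indicator (fun p => ENNReal.ofReal p.1) (r, θ) := by
        rw [Measure.volume_eq_prod,
          lintegral_prod_symm' _ (measurable_fst.ennreal_ofReal.indicator hB)]
    _ = ∫⁻ θ in Ioo α β, ENNReal.ofReal (t θ ^ 2 / 2) := by
        rw [← lintegral_indicator measurableSet_Ioo]
        congr 1
        funext θ
        by_cases hθ : θ ∈ Ioo α β
        · rw [indicator_of_mem hθ, ← setLIntegral_Ioc_zero_ofReal (ht0 θ),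
            ← lintegral_indicator measurableSet_Ioc]
          congr 1
          funext r
          have hfiber : (r, θ) ∈ B ↔ r ∈ Ioc 0 (t θ) := and_iff_left hθ
          simp only [indicator_apply, hfiber]
        · have hfiber : ∀ r, (r, θ) ∉ B := fun r h => hθ h.2
          simp only [indicator_of_notMem hθ, indicator_of_notMem (hfiber _), lintegral_zero]
    _ = ENNReal.ofReal (∫ θ in α..β, t θ ^ 2 / 2) := by
        rw [intervalIntegral.integral_of_le hαβ, integral_Ioc_eq_integral_Ioo,
          ofReal_integral_eq_lintegral_ofReal
            ((by fun_prop : Continuous fun θ => t θ ^ 2 / 2).integrableOn_Icc.mono_set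
              Ioo_subset_Icc_self)
            (ae_of_all _ fun θ => by positivity)]

lemma sum_intervalIntegral_add_mul {h : ℝ → ℝ} (hh : Continuous h) (n : ℕ) (c w δ : ℝ) :
    ∑ i ∈ Finset.range n, ∫ θ in (c + i * δ)..(c + i * δ + w), h θ
      = ∫ θ in c..(c + w), ∑ i ∈ Finset.range n, h (θ + i * δ) := by
  rw [intervalIntegral.integral_finsetSum (f := fun (i : ℕ) θ => h (θ + i * δ)) fun i _ =>
    (by fun_prop : Continuous fun θ => h (θ + i * δ)).intervalIntegrable _ _]
  refine Finset.sum_congr rfl fun i _ => ?_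
  rw [intervalIntegral.integral_comp_add_right h, add_right_comm]

lemma volume_preimage_linearIsometryEquiv {E F : Type*} [NormedAddCommGroup E]
    [InnerProductSpace ℝ E] [FiniteDimensional ℝ E] [MeasurableSpace E] [BorelSpace E]
    [NormedAddCommGroup F] [InnerProductSpace ℝ F] [FiniteDimensional ℝ F] [MeasurableSpace F]
    [BorelSpace F] (f : E ≃ₗᵢ[ℝ] F) (s : Set F) : volume (f ⁻¹' s) = volume s :=
  f.measurePreserving.measure_preimage_equiv (f := f.toMeasurableEquiv) s

def wedge (α β : ℝ) : Set ℂ :=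
  {z | ∃ r θ : ℝ, 0 < r ∧ α < θ ∧ θ < β ∧ z = r • (Circle.exp θ : ℂ)}

variable {α β : ℝ}

lemma wedge_eq_setOf_arg (hα : -π ≤ α) (hβ : β ≤ π) :
    wedge α β = {z | z ≠ 0 ∧ z.arg ∈ Ioo α β} := by
  ext z
  constructor
  · rintro ⟨r, θ, hr, hαθ, hθβ, rfl⟩
    have harg : (r • (Circle.exp θ : ℂ)).arg = θ := by
      rw [Complex.real_smul, Complex.arg_real_mul _ hr, Circle.coe_exp,
        Complex.arg_exp_mul_I, toIocMod_eq_self]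
      exact ⟨by linarith, by linarith⟩
    refine ⟨smul_ne_zero hr.ne' (Circle.coe_ne_zero _), ?_⟩
    rw [harg]
    exact ⟨hαθ, hθβ⟩
  · rintro ⟨hz, hαz, hzβ⟩
    refine ⟨‖z‖, z.arg, norm_pos_iff.mpr hz, hαz, hzβ, ?_⟩
    rw [Complex.real_smul, Circle.coe_exp, Complex.norm_mul_exp_arg_mul_I]

lemma wedge_inter_closedBall_eq {b : ℂ} {ρ : ℝ} (hα : -π ≤ α) (hβ : β ≤ π) (hb : ‖b‖ ≤ ρ) :
    wedge α β ∩ closedBall b ρ =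
      {z | z ≠ 0 ∧ z.arg ∈ Ioo α β ∧ ‖z‖ ≤ radialExtent b (Circle.exp z.arg : ℂ) ρ} := by
  rw [wedge_eq_setOf_arg hα hβ]
  ext z
  have hball : z ∈ closedBall b ρ ↔ ‖z‖ ≤ radialExtent b (Circle.exp z.arg : ℂ) ρ := by
    nth_rewrite 1 [← Complex.norm_mul_exp_arg_mul_I z]
    rw [← Circle.coe_exp, ← Complex.real_smul]
    exact smul_mem_closedBall_iff (Circle.norm_coe _) hb (norm_nonneg z)
  simp only [mem_inter_iff, mem_ofPred_eq, hball, and_assoc]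

lemma preimage_rotation_wedge (γ : ℝ) :
    rotation (Circle.exp γ) ⁻¹' wedge (α + γ) (β + γ) = wedge α β := by
  have hrot : ∀ (r θ : ℝ), rotation (Circle.exp γ) (r • (Circle.exp θ : ℂ))
      = r • (Circle.exp (θ + γ) : ℂ) := fun r θ => by
    rw [LinearIsometryEquiv.map_smul, rotation_apply, add_comm, Circle.exp_add,
      Circle.coe_mul]
  ext z
  constructor
  · rintro ⟨r, θ, hr, h1, h2, hz⟩
    refine ⟨r, θ - γ, hr, by linarith, by linarith, ?_⟩
    apply (rotation (Circle.exp γ)).injective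
    rw [hz, hrot, sub_add_cancel]
  · rintro ⟨r, θ, hr, h1, h2, rfl⟩
    exact ⟨r, θ + γ, hr, by linarith, by linarith, hrot r θ⟩

theorem volume_wedge_inter_closedBall (hαβ : α ≤ β) (hβ : β ≤ α + 2 * π) {b : ℂ}
    {ρ : ℝ} (hb : ‖b‖ ≤ ρ) :
    volume (wedge α β ∩ closedBall b ρ)
      = ENNReal.ofReal (∫ θ in α..β, radialExtent b (Circle.exp θ : ℂ) ρ ^ 2 / 2) := by
  -- rotating by `γ` moves the wedge into `[-π, π]`, where `arg` is a polar angle of its points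
  set γ := -(α + π)
  set R := rotation (Circle.exp γ)
  have hRb : ‖R b‖ ≤ ρ := by rwa [R.norm_map]
  have hpre : wedge α β ∩ closedBall b ρ
      = R ⁻¹' (wedge (α + γ) (β + γ) ∩ closedBall (R b) ρ) := by
    rw [preimage_inter, preimage_rotation_wedge, LinearIsometryEquiv.preimage_closedBall,
      LinearIsometryEquiv.symm_apply_apply]
  have hext : ∀ θ, radialExtent (R b) (Circle.exp (θ + γ) : ℂ) ρ
      = radialExtent b (Circle.exp θ : ℂ) ρ := by
    intro θ
    rw [add_comm, Circle.exp_add, Circle.coe_mul, ← rotation_apply]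
    exact radialExtent_map R.toLinearIsometry b _ ρ
  rw [hpre, volume_preimage_linearIsometryEquiv,
    wedge_inter_closedBall_eq (by linarith) (by linarith) hRb,
    volume_setOf_arg_mem_norm_le (t := fun θ => radialExtent (R b) (Circle.exp θ : ℂ) ρ)
      (continuous_radialExtent (by fun_prop) _ _)
      (fun _ => radialExtent_nonneg hRb) (by linarith) (by linarith) (by linarith),
    ← intervalIntegral.integral_comp_add_right]
  simp only [hext]

lemma sum_sq_circleExp_mul_eq_zero {m : ℕ} (hm : 1 < m) (w : ℂ) (θ : ℝ) :
    ∑ i ∈ Finset.range m, ((Circle.exp (θ + i * (π / m)) : ℂ) * w) ^ 2 = 0 := by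
  have hm0 : (m : ℂ) ≠ 0 := by exact_mod_cast (show m ≠ 0 by omega)
  have hterm : ∀ i : ℕ, ((Circle.exp (θ + i * (π / m)) : ℂ) * w) ^ 2
      = ((Circle.exp θ : ℂ) * w) ^ 2 * Complex.exp (2 * π * Complex.I / m) ^ i := by
    intro i
    rw [mul_pow, mul_pow, Circle.coe_exp, Circle.coe_exp, ← Complex.exp_nat_mul,
      ← Complex.exp_nat_mul, ← Complex.exp_nat_mul, mul_right_comm, ← Complex.exp_add]
    congr 2
    push_cast
    field_simp
  simp_rw [hterm, ← Finset.mul_sum,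
    (Complex.isPrimitiveRoot_exp m (by omega)).geom_sum_eq_zero hm, mul_zero]

lemma radialExtent_sq_add_radialExtent_neg_sq_eq_re {b u : ℂ} {ρ : ℝ} (hu : ‖u‖ = 1)
    (hb : ‖b‖ ≤ ρ) :
    radialExtent b u ρ ^ 2 + radialExtent b (-u) ρ ^ 2
      = 2 * ρ ^ 2 + 2 * ((u * conj b) ^ 2).re := by
  have hnorm : ‖b‖ ^ 2 = (u * conj b).re ^ 2 + (u * conj b).im ^ 2 := by
    rw [← Complex.norm_conj b, ← one_mul ‖conj b‖, ← hu, ← norm_mul, Complex.sq_norm,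
      Complex.normSq_apply]
    ring
  rw [radialExtent_sq_add_radialExtent_neg_sq hb, Complex.inner, hnorm]
  generalize u * conj b = v
  rw [sq v, Complex.mul_re]
  ring

lemma sum_radialExtent_sq_eq {m : ℕ} (hm : 1 < m) {b : ℂ} {ρ : ℝ} (hb : ‖b‖ ≤ ρ) (θ : ℝ) :
    ∑ i ∈ Finset.range (2 * m), radialExtent b (Circle.exp (θ + i * (π / m)) : ℂ) ρ ^ 2 / 2
      = m * ρ ^ 2 := by
  have hantipode : ∀ i : ℕ, (Circle.exp (θ + ↑(m + i) * (π / m)) : ℂ)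
      = -Circle.exp (θ + i * (π / m)) := by
    intro i
    have hm0 : (m : ℝ) ≠ 0 := by exact_mod_cast (show m ≠ 0 by omega)
    rw [show θ + ↑(m + i) * (π / m) = (θ + i * (π / m)) + π by push_cast; field_simp; ring,
      Circle.exp_add, Circle.coe_mul, Circle.coe_exp π, Complex.exp_pi_mul_I, mul_neg_one]
  have hsq := congrArg Complex.re (sum_sq_circleExp_mul_eq_zero hm (conj b) θ)
  rw [Complex.re_sum, Complex.zero_re] at hsq
  rw [two_mul, Finset.sum_range_add, ← Finset.sum_add_distrib]
  simp_rw [hantipode, ← add_div,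
    radialExtent_sq_add_radialExtent_neg_sq_eq_re (Circle.norm_coe _) hb]
  have hsummand : ∀ x : ℝ, (2 * ρ ^ 2 + 2 * x) / 2 = ρ ^ 2 + x := fun x => by ring
  simp_rw [hsummand]
  rw [Finset.sum_add_distrib, hsq, Finset.sum_const, Finset.card_range, nsmul_eq_mul, add_zero]

lemma sector_eq_preimage_wedge (k j : ℕ) :
    sector k j
      = Complex.orthonormalBasisOneI.repr.symm ⁻¹' wedge (j * π / k) ((j + 1) * π / k) := by
  have hpolar : ∀ r θ : ℝ, Complex.orthonormalBasisOneI.repr.symm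
      (r • WithLp.toLp 2 ![Real.cos θ, Real.sin θ]) = r • (Circle.exp θ : ℂ) := by
    intro r θ
    rw [LinearIsometryEquiv.map_smul, Complex.orthonormalBasisOneI_repr_symm_apply,
      Circle.coe_exp, Complex.exp_mul_I]
    simp
  ext x
  constructor
  · rintro ⟨r, θ, hr, h1, h2, rfl⟩
    exact ⟨r, θ, hr, h1, h2, hpolar r θ⟩
  · rintro ⟨r, θ, hr, h1, h2, hx⟩
    refine ⟨r, θ, hr, h1, h2, Complex.orthonormalBasisOneI.repr.symm.injective ?_⟩
    rw [hx, hpolar]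

theorem toReal_volume_sector_inter_closedBall {k : ℕ} (hk : 0 < k) (j : ℕ)
    {a : EuclideanSpace ℝ (Fin 2)} {ρ : ℝ} (ha : ‖a‖ ≤ ρ) :
    (volume (sector k j ∩ closedBall a ρ)).toReal
      = ∫ θ in (j * π / k)..((j + 1) * π / k),
          radialExtent (Complex.orthonormalBasisOneI.repr.symm a) (Circle.exp θ : ℂ) ρ ^ 2
            / 2 := by
  set e := Complex.orthonormalBasisOneI.repr.symm
  have hk1 : (1 : ℝ) ≤ k := by exact_mod_cast hk
  have hwidth : (j + 1) * π / k = j * π / k + π / k := by ring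
  have hw0 : 0 ≤ π / k := by positivity
  have hw1 : π / k ≤ π := div_le_self pi_pos.le hk1
  have hball : closedBall a ρ = e ⁻¹' closedBall (e a) ρ := by
    rw [LinearIsometryEquiv.preimage_closedBall, LinearIsometryEquiv.symm_apply_apply]
  have hea : ‖e a‖ ≤ ρ := by rwa [e.norm_map]
  rw [sector_eq_preimage_wedge, hball, ← preimage_inter, volume_preimage_linearIsometryEquiv,
    volume_wedge_inter_closedBall (by linarith) (by linarith [pi_pos]) hea, ENNReal.toReal_ofReal]
  exact intervalIntegral.integral_nonneg (by linarith) fun θ _ => by positivity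

end PizzaSharing

open PizzaSharing

theorem pizza_sharing_general (k p : ℕ) (hpk : p < k) (hdvd : p ∣ k)
    (ρ : ℝ) (a : EuclideanSpace ℝ (Fin 2)) (ha : ‖a‖ ≤ ρ)
    (r : ℕ) :
    ∑ i ∈ Finset.range (2 * k / p),
        (volume (sector k (r + p * i) ∩ closedBall a ρ)).toReal
      = π * ρ ^ 2 / p := by
  obtain ⟨m, rfl⟩ := hdvd
  have hp : 0 < p := Nat.pos_of_ne_zero fun h => by simp [h] at hpk
  have hm : 1 < m := Nat.lt_of_mul_lt_mul_left (by simpa using hpk : p * 1 < p * m)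
  have hpR : (p : ℝ) ≠ 0 := by positivity
  have hmR : (m : ℝ) ≠ 0 := by positivity
  set b := Complex.orthonormalBasisOneI.repr.symm a
  have hb : ‖b‖ ≤ ρ := by rwa [LinearIsometryEquiv.norm_map]
  have hcont : Continuous fun θ : ℝ => radialExtent b (Circle.exp θ : ℂ) ρ ^ 2 / 2 :=
    ((continuous_radialExtent (by fun_prop) b ρ).pow 2).div_const 2
  have hslice : ∀ i : ℕ, (volume (sector (p * m) (r + p * i) ∩ closedBall a ρ)).toReal
      = ∫ θ in (r * π / (p * m) + i * (π / m))..(r * π / (p * m) + i * (π / m) + π / (p * m)),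
          radialExtent b (Circle.exp θ : ℂ) ρ ^ 2 / 2 := by
    intro i
    rw [toReal_volume_sector_inter_closedBall (by positivity) _ ha]
    congr 1 <;> push_cast <;> field_simp
  rw [show 2 * (p * m) / p = 2 * m by rw [mul_left_comm, Nat.mul_div_cancel_left _ hp],
    Finset.sum_congr rfl fun i _ => hslice i,
    sum_intervalIntegral_add_mul hcont,
    intervalIntegral.integral_congr fun θ _ => sum_radialExtent_sq_eq hm hb θ,
    intervalIntegral.integral_const, smul_eq_mul]
  field_simp
  ring

/-- Sharing pizza among `p` people with the arrangement `I₂(k)`, `p ∣ k`, `p < k`: if the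
pizza is the disc of radius `ρ` centered at `a` with `‖a‖ ≤ ρ` (the disc `K + a` where
`K = B(0,ρ)`), then for every residue `0 ≤ r < p`, the total area of the slices
`T_{r+pi}`, `0 ≤ i < 2k/p`, equals `Area(K)/p = πρ²/p`. -/
theorem pizza_sharing (k p : ℕ) (hk : 0 < k) (hp : 0 < p) (hpk : p < k) (hdvd : p ∣ k)
    (ρ : ℝ) (hρ : 0 ≤ ρ) (a : EuclideanSpace ℝ (Fin 2)) (ha : ‖a‖ ≤ ρ)
    (r : ℕ) (hr : r < p) :
    ∑ i ∈ Finset.range (2 * k / p),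
        (volume (sector k (r + p * i) ∩ closedBall a ρ)).toReal
      = π * ρ ^ 2 / p :=
  pizza_sharing_general k p hpk hdvd ρ a ha r
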